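/- Let (K, w) be a rank-1 valued field, R its valuation ring, 𝔪 its maximal ideal. Suppose f ∈ R[[X]] with w(f) = 0 (where w(Σ f_i X^i) = inf w(f_i)) and all coefficients f_i ∈ 𝔪. Then for every ε > 0 there exist an index i > 0 and a ∈ 𝔪 with w(a) < ε such that w(f_i) + i·w(a) < w(f₀); in particular, the substituted series g(X) = f(aX) ∈ R{X} satisfies w(g_i) < w(g₀) for some i > 0, hence g is not invertible in K{X}. -/

import Mathlib

open PowerSeries Filter Set

/-- An additive rank-1 (real-valued) non-archimedean valuation on a field `K`,
with values in `EReal` (real numbers on nonzero elements, `⊤` at `0`). -/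
structure AddRealValuation (K : Type*) [Field K] where
  w : K → EReal
  map_zero' : w 0 = ⊤
  finite' : ∀ x : K, x ≠ 0 → ∃ r : ℝ, w x = (r : EReal)
  map_one' : w 1 = 0
  map_mul' : ∀ x y : K, w (x * y) = w x + w y
  map_neg' : ∀ x : K, w (-x) = w x
  add_le' : ∀ x y : K, min (w x) (w y) ≤ w (x + y)

namespace AddRealValuation

variable {K : Type*} [Field K] (v : AddRealValuation K)

/-- The valuation is non-discrete: there exist elements of arbitrarily
small positive valuation. -/
def Nondiscrete : Prop := ∀ ε : ℝ, 0 < ε → ∃ x : K, 0 < v.w x ∧ v.w x < (ε : EReal)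

/-- `K` is complete with respect to `v`: every Cauchy sequence converges. -/
def IsComplete : Prop :=
  ∀ u : ℕ → K, (∀ M : ℝ, ∃ N : ℕ, ∀ m ≥ N, ∀ n ≥ N, (M : EReal) ≤ v.w (u m - u n)) →
    ∃ L : K, ∀ M : ℝ, ∃ N : ℕ, ∀ n ≥ N, (M : EReal) ≤ v.w (u n - L)

/-- The valuation ring `R = {x : K | w x ≥ 0}` of `v`. -/
def subring : Subring K where
  carrier := {x | 0 ≤ v.w x}
  zero_mem' := by show (0:EReal) ≤ v.w 0; rw [v.map_zero']; exact le_top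
  one_mem' := by show (0:EReal) ≤ v.w 1; rw [v.map_one']
  add_mem' := fun hx hy => le_trans (le_min hx hy) (v.add_le' _ _)
  mul_mem' := fun hx hy => by
    show (0:EReal) ≤ v.w _; rw [v.map_mul']; exact add_nonneg hx hy
  neg_mem' := fun {x} hx => by show (0:EReal) ≤ v.w (-x); rw [v.map_neg']; exact hx

/-- The extension of `v` to power series over `K`: the infimum of the
valuations of the coefficients. -/
noncomputable def wS (f : PowerSeries K) : EReal := ⨅ i : ℕ, v.w (PowerSeries.coeff i f)

/-- The extension of `v` to power series over the valuation ring `R` of `v`. -/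
noncomputable def wR (f : PowerSeries v.subring) : EReal :=
  ⨅ i : ℕ, v.w ((PowerSeries.coeff i f : v.subring) : K)

/-- `f` is a convergent power series (lies in the Tate algebra `K{X}`):
the valuations of the coefficients tend to `∞`. -/
def Conv (f : PowerSeries K) : Prop :=
  ∀ M : ℝ, ∃ N : ℕ, ∀ i ≥ N, (M : EReal) ≤ v.w (PowerSeries.coeff i f)

/-- The series `f(c) = Σ fᵢ cⁱ` (with `f` over the valuation ring `R`) converges to `0`:
the valuations of the partial sums tend to `∞`. -/
def EvalZeroR (f : PowerSeries v.subring) (c : v.subring) : Prop :=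
  ∀ M : ℝ, ∃ N : ℕ, ∀ n ≥ N,
    (M : EReal) ≤ v.w ((∑ i ∈ Finset.range n, PowerSeries.coeff i f * c ^ i : v.subring) : K)

end AddRealValuation

/-- `𝓕` is a defining family of rank-1 valuations exhibiting the domain `D`
(with fraction field `F`) as a generalized Krull domain:
(a) for each `v ∈ 𝓕` the valuation ring of `v` is the localization of `D`
at the prime `{a : v a > 0}`; (b) `⋂ D_v = D`; (c) each nonzero `a ∈ D`
satisfies `v a = 0` for all but finitely many `v ∈ 𝓕`. -/
def IsGKFamily (D : Type*) [CommRing D] [IsDomain D] (F : Type*) [Field F]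
    [Algebra D F] [IsFractionRing D F] (𝓕 : Set (AddRealValuation F)) : Prop :=
  (∀ u ∈ 𝓕, ∀ x : F, 0 ≤ u.w x ↔
    ∃ a b : D, b ≠ 0 ∧ ¬ 0 < u.w (algebraMap D F b) ∧ x * algebraMap D F b = algebraMap D F a) ∧
  (∀ x : F, (∀ u ∈ 𝓕, 0 ≤ u.w x) → ∃ a : D, x = algebraMap D F a) ∧
  (∀ a : D, a ≠ 0 → {u ∈ 𝓕 | u.w (algebraMap D F a) ≠ 0}.Finite)

/-!
Since `inf_i w(fᵢ) = 0 < w(f₀)`, some `i > 0` has `w(fᵢ) < w(f₀)`, and non-discreteness provides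
`a ∈ 𝔪` so small that `i · w(a)` still fits into the gap; then `g = f(aX)` lies in `R{X}` and
`w(gᵢ) < w(g₀)`. On the other hand a unit `g` of `K{X}` satisfies `w(g₀) ≤ w(gₙ)` for all `n`:
if `i`, `j` are the first indices at which the coefficients of `g` and of its inverse `h` attain
their minimal valuation, the coefficient of `X^(i+j)` in `g * h = 1` has the finite valuation
`w(gᵢ) + w(hⱼ)`, which forces `i + j = 0`.
-/

lemma EReal.exists_pos_add_lt {x y : EReal} (h : x < y) : ∃ δ : ℝ, 0 < δ ∧ x + δ < y := by
  obtain ⟨r, hxr, hry⟩ := EReal.lt_iff_exists_real_btwn.1 h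
  obtain ⟨s, hrs, hsy⟩ := EReal.lt_iff_exists_real_btwn.1 hry
  refine ⟨s - r, by simpa [sub_pos] using hrs, ?_⟩
  calc x + ((s - r : ℝ) : EReal) < r + ((s - r : ℝ) : EReal) := EReal.add_lt_add_right_coe hxr _
    _ = s := by rw [← EReal.coe_add, add_sub_cancel]
    _ < y := hsy

namespace AddRealValuation

variable {K : Type*} [Field K] (v : AddRealValuation K)

lemma w_ne_bot (x : K) : v.w x ≠ ⊥ := by
  by_cases hx : x = 0
  · simp [hx, v.map_zero']
  · obtain ⟨r, hr⟩ := v.finite' x hx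
    simp [hr]

lemma w_eq_top_iff {x : K} : v.w x = ⊤ ↔ x = 0 := by
  refine ⟨fun h => by_contra fun hx => ?_, fun h => h ▸ v.map_zero'⟩
  obtain ⟨r, hr⟩ := v.finite' x hx
  exact EReal.coe_ne_top r (hr ▸ h)

lemma w_add_eq_of_lt {x y : K} (h : v.w x < v.w y) : v.w (x + y) = v.w x := by
  refine le_antisymm ?_ ((le_min le_rfl h.le).trans (v.add_le' x y))
  have h' := v.add_le' (x + y) (-y)
  rw [add_neg_cancel_right, v.map_neg'] at h'
  exact (min_le_iff.1 h').resolve_right h.not_ge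

lemma lt_w_sum {ι : Type*} {s : Finset ι} {t : ι → K} {c : EReal} (hc : c < ⊤)
    (h : ∀ j ∈ s, c < v.w (t j)) : c < v.w (∑ j ∈ s, t j) := by
  classical
  induction s using Finset.induction_on with
  | empty => simpa [v.map_zero'] using hc
  | insert a s ha ih =>
    rw [Finset.sum_insert ha]
    exact (lt_min (h a (Finset.mem_insert_self a s))
      (ih fun j hj => h j (Finset.mem_insert_of_mem hj))).trans_le (v.add_le' _ _)

lemma w_pow (x : K) (n : ℕ) : v.w (x ^ n) = n * v.w x := by
  induction n with
  | zero => simp [v.map_one']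
  | succ n ih =>
    rw [pow_succ, v.map_mul', ih, Nat.cast_succ,
      EReal.right_distrib_of_nonneg (Nat.cast_nonneg' n) zero_le_one, one_mul]

lemma w_coeff_mk_mul_pow (f : K⟦X⟧) (a : K) (n : ℕ) :
    v.w (coeff n (PowerSeries.mk fun m => coeff m f * a ^ m : K⟦X⟧)) =
      v.w (coeff n f) + n * v.w a := by
  rw [coeff_mk, v.map_mul', v.w_pow]

lemma conv_mk_coeff_mul_pow {f : K⟦X⟧} (hf : ∀ n, 0 ≤ v.w (coeff n f)) {a : K}
    (ha : 0 < v.w a) : v.Conv (PowerSeries.mk fun n => coeff n f * a ^ n : K⟦X⟧) := by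
  intro M
  obtain ⟨t, ht0, hta⟩ := EReal.lt_iff_exists_real_btwn.1 ha
  have ht0 : 0 < t := by exact_mod_cast ht0
  refine ⟨⌈M / t⌉₊, fun n hn => ?_⟩
  have hM : M ≤ n * t := (div_le_iff₀ ht0).1 ((Nat.le_ceil _).trans (by exact_mod_cast hn))
  calc (M : EReal) ≤ ((n * t : ℝ) : EReal) := by exact_mod_cast hM
    _ = n * (t : EReal) := by rw [EReal.coe_mul, EReal.coe_coe_eq_natCast]
    _ ≤ n * v.w a := mul_le_mul_of_nonneg_left hta.le (Nat.cast_nonneg' n)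
    _ ≤ v.w (coeff n f) + n * v.w a := le_add_of_nonneg_left (hf n)
    _ = _ := (v.w_coeff_mk_mul_pow f a n).symm

def IsFirstMinIndex (g : K⟦X⟧) (i : ℕ) : Prop :=
  (∀ m, v.w (coeff i g) ≤ v.w (coeff m g)) ∧ ∀ j < i, v.w (coeff i g) < v.w (coeff j g)

lemma exists_isFirstMinIndex {g : K⟦X⟧} (hg : v.Conv g) (hg0 : g ≠ 0) :
    ∃ i, v.IsFirstMinIndex g i := by
  classical
  obtain ⟨k, hk⟩ : ∃ k, coeff k g ≠ 0 := by
    by_contra! h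
    exact hg0 (ext fun n => by simp [h n])
  obtain ⟨r, hr⟩ := v.finite' _ hk
  obtain ⟨N, hN⟩ := hg (r + 1)
  have hbound : ∀ n ≥ N, v.w (coeff k g) ≤ v.w (coeff n g) := fun n hn =>
    hr ▸ (EReal.coe_le_coe_iff.2 (by linarith)).trans (hN n hn)
  have hkN : k < N := by
    by_contra! hkN
    have := hN k hkN
    rw [hr, EReal.coe_le_coe_iff] at this
    linarith
  obtain ⟨m, -, hm⟩ := (Finset.range N).exists_min_image (fun n => v.w (coeff n g))
    ⟨k, Finset.mem_range.2 hkN⟩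
  have hmin : ∃ i, ∀ n, v.w (coeff i g) ≤ v.w (coeff n g) := by
    refine ⟨m, fun n => ?_⟩
    by_cases hn : n < N
    · exact hm n (Finset.mem_range.2 hn)
    · exact (hm k (Finset.mem_range.2 hkN)).trans (hbound n (not_lt.1 hn))
  refine ⟨Nat.find hmin, Nat.find_spec hmin, fun j hj => ?_⟩
  obtain ⟨n, hn⟩ := not_forall.1 (Nat.find_min hmin hj)
  exact (Nat.find_spec hmin n).trans_lt (not_le.1 hn)

lemma coeff_ne_zero_of_isFirstMinIndex {g : K⟦X⟧} (hg0 : g ≠ 0) {i : ℕ}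
    (hi : v.IsFirstMinIndex g i) : coeff i g ≠ 0 := by
  intro h
  refine hg0 (ext fun n => ?_)
  have := hi.1 n
  rw [h, v.map_zero', top_le_iff, v.w_eq_top_iff] at this
  rw [this, map_zero]

/-- Gauss's lemma at the first minimal indices: the product of the two leading terms strictly
dominates every other term of the coefficient of `g * h`. -/
lemma w_coeff_add_mul_of_isFirstMinIndex {g h : K⟦X⟧} {i j : ℕ} (hi : v.IsFirstMinIndex g i)
    (hj : v.IsFirstMinIndex h j) (hgi : coeff i g ≠ 0) (hhj : coeff j h ≠ 0) :
    v.w (coeff (i + j) (g * h)) = v.w (coeff i g) + v.w (coeff j h) := by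
  classical
  have hmem : (i, j) ∈ Finset.HasAntidiagonal.antidiagonal (i + j) :=
    Finset.HasAntidiagonal.mem_antidiagonal.2 rfl
  rw [coeff_mul, ← Finset.add_sum_erase _ _ hmem, v.w_add_eq_of_lt, v.map_mul']
  rw [v.map_mul']
  refine v.lt_w_sum (EReal.add_lt_top (mt v.w_eq_top_iff.1 hgi) (mt v.w_eq_top_iff.1 hhj))
    fun p hp => ?_
  obtain ⟨hne, hp⟩ := Finset.mem_erase.1 hp
  rw [Finset.HasAntidiagonal.mem_antidiagonal] at hp
  rw [v.map_mul']
  rcases lt_or_gt_of_ne (show p.1 ≠ i from fun h1 => hne (Prod.ext h1 (by omega)))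
    with hlt | hgt
  · exact EReal.add_lt_add_of_lt_of_le' (hi.2 _ hlt) (hj.1 _) (v.w_ne_bot _)
      fun _ htop => absurd (v.w_eq_top_iff.1 htop) hhj
  · rw [add_comm, add_comm (v.w (coeff p.1 g))]
    exact EReal.add_lt_add_of_lt_of_le' (hj.2 _ (by omega)) (hi.1 _) (v.w_ne_bot _)
      fun _ htop => absurd (v.w_eq_top_iff.1 htop) hgi

lemma w_coeff_zero_le_of_mul_eq_one {g h : K⟦X⟧} (hg : v.Conv g) (hh : v.Conv h)
    (hgh : g * h = 1) (n : ℕ) : v.w (coeff 0 g) ≤ v.w (coeff n g) := by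
  have hg0 : g ≠ 0 := left_ne_zero_of_mul_eq_one hgh
  have hh0 : h ≠ 0 := right_ne_zero_of_mul_eq_one hgh
  obtain ⟨i, hi⟩ := v.exists_isFirstMinIndex hg hg0
  obtain ⟨j, hj⟩ := v.exists_isFirstMinIndex hh hh0
  have hgi := v.coeff_ne_zero_of_isFirstMinIndex hg0 hi
  have hhj := v.coeff_ne_zero_of_isFirstMinIndex hh0 hj
  have hij : v.w (coeff (i + j) (g * h)) ≠ ⊤ := by
    rw [v.w_coeff_add_mul_of_isFirstMinIndex hi hj hgi hhj]
    exact EReal.add_ne_top (mt v.w_eq_top_iff.1 hgi) (mt v.w_eq_top_iff.1 hhj)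
  obtain rfl : i = 0 := by
    rw [hgh, coeff_one] at hij
    split_ifs at hij with h0
    · omega
    · exact absurd v.map_zero' hij
  exact hi.1 n

section

variable {v}

lemma Nondiscrete.exists_w_lt_and_mul_le (hnd : v.Nondiscrete) {ε δ : ℝ} (hε : 0 < ε)
    (hδ : 0 < δ) (n : ℕ) :
    ∃ a : K, 0 < v.w a ∧ v.w a < ε ∧ (n : EReal) * v.w a ≤ δ := by
  obtain ⟨a, ha0, haε⟩ := hnd (min ε (δ / (n + 1))) (by positivity)
  refine ⟨a, ha0, haε.trans_le (EReal.coe_le_coe_iff.2 (min_le_left _ _)), ?_⟩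
  lift v.w a to ℝ using ⟨(haε.trans (EReal.coe_lt_top _)).ne, v.w_ne_bot a⟩ with t
  rw [EReal.coe_pos] at ha0
  rw [EReal.coe_lt_coe_iff, lt_min_iff, lt_div_iff₀ (by positivity)] at haε
  rw [← EReal.coe_coe_eq_natCast, ← EReal.coe_mul, EReal.coe_le_coe_iff]
  nlinarith

end

end AddRealValuation

/-- Let `(K, w)` be a non-discrete rank-1 valued field with valuation
ring `R` and maximal ideal `𝔪`. If `f ∈ R[[X]]` satisfies `w f = 0` and all its
coefficients lie in `𝔪`, then for every `ε > 0` there are `i > 0` and `a ∈ 𝔪` with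
`w a < ε` and `w fᵢ + i · w a < w f₀`; in particular the substituted series
`g(X) = f(aX)` satisfies `w gᵢ < w g₀`, hence `g` is not invertible in `K{X}`. -/
theorem statement17 {K : Type*} [Field K] (v : AddRealValuation K)
    (hnd : v.Nondiscrete)
    (f : PowerSeries K) (hwf : v.wS f = 0)
    (hR : ∀ i : ℕ, 0 < v.w (PowerSeries.coeff i f)) :
    ∀ ε : ℝ, 0 < ε → ∃ i : ℕ, 0 < i ∧ ∃ a : K, 0 < v.w a ∧ v.w a < (ε : EReal) ∧
      v.w (PowerSeries.coeff i f) + (i : EReal) * v.w a < v.w (PowerSeries.coeff 0 f) ∧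
      (v.w ((PowerSeries.mk fun n => PowerSeries.coeff n f * a ^ n).coeff i)
        < v.w ((PowerSeries.mk fun n => PowerSeries.coeff n f * a ^ n).coeff 0)) ∧
      ¬ ∃ h : PowerSeries K, v.Conv h ∧
        (PowerSeries.mk fun n => PowerSeries.coeff n f * a ^ n) * h = 1 := by
  intro ε hε
  obtain ⟨i, hi⟩ : ∃ i, v.w (coeff i f) < v.w (coeff 0 f) :=
    iInf_lt_iff.1 (show v.wS f < v.w (coeff 0 f) from hwf ▸ hR 0)
  have hi0 : 0 < i := Nat.pos_of_ne_zero fun h0 => (h0 ▸ hi).false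
  obtain ⟨δ, hδ, hgap⟩ := EReal.exists_pos_add_lt hi
  obtain ⟨a, ha0, haε, haδ⟩ := hnd.exists_w_lt_and_mul_le hε hδ i
  have hlt : v.w (coeff i f) + i * v.w a < v.w (coeff 0 f) :=
    (add_le_add le_rfl haδ).trans_lt hgap
  have hg : v.w (coeff i (PowerSeries.mk fun n => coeff n f * a ^ n))
      < v.w (coeff 0 (PowerSeries.mk fun n => coeff n f * a ^ n)) := by
    rwa [v.w_coeff_mk_mul_pow, v.w_coeff_mk_mul_pow, Nat.cast_zero, zero_mul, add_zero]
  refine ⟨i, hi0, a, ha0, haε, hlt, hg, ?_⟩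
  rintro ⟨h, hh, hgh⟩
  exact (v.w_coeff_zero_le_of_mul_eq_one (v.conv_mk_coeff_mul_pow (fun n => (hR n).le) ha0)
    hh hgh i).not_gt hg
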